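/- arXiv:1710.00582 — 2 statements merged into one kernel-verified Lean document; each statement's English description precedes it below -/
import Mathlib

section
/- If a finite group G satisfies the replacement property (for irredundant generating sequences of maximal length m(G)), then the Frattini subgroup of G is trivial. -/
open Subgroup
open scoped Classical

/-- A set `s` is an irredundant generating set of the group `G`: it generates `G`
but no proper subset does. -/
def IrredSet {G : Type*} [Group G] (s : Set G) : Prop :=
  Subgroup.closure s = ⊤ ∧ ∀ x ∈ s, Subgroup.closure (s \ {x}) ≠ ⊤

/-- `mIrr G` is the largest size of an irredundant generating set of `G`. -/
noncomputable def mIrr (G : Type*) [Group G] : ℕ :=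
  sSup {n | ∃ s : Set G, s.Finite ∧ s.ncard = n ∧ IrredSet s}

/-- `dGen G` is the smallest size of a generating set of `G`. -/
noncomputable def dGen (G : Type*) [Group G] : ℕ :=
  sInf {n | ∃ s : Set G, s.Finite ∧ s.ncard = n ∧ Subgroup.closure s = ⊤}

/-- A sequence `g : Fin n → G` is an irredundant generating sequence:
it generates `G` but no proper subsequence does. -/
def IrredSeq {G : Type*} [Group G] {n : ℕ} (g : Fin n → G) : Prop :=
  Subgroup.closure (Set.range g) = ⊤ ∧
  ∀ i : Fin n, Subgroup.closure (g '' {i}ᶜ) ≠ ⊤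

/-- `G` satisfies the replacement property: for every irredundant generating
sequence of maximal length `mIrr G` and every nontrivial `x : G`, some entry
can be replaced by `x` so that the sequence still generates. -/
def ReplacementProperty (G : Type*) [Group G] : Prop :=
  ∀ g : Fin (mIrr G) → G, IrredSeq g → ∀ x : G, x ≠ 1 →
    ∃ i, Subgroup.closure (Set.range (Function.update g i x)) = ⊤

/-- The strong replacement property: replacement holds for irredundant
generating sequences of any length. -/
def StrongReplacementProperty (G : Type*) [Group G] : Prop :=
  ∀ (n : ℕ) (g : Fin n → G), IrredSeq g → ∀ x : G, x ≠ 1 →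
    ∃ i, Subgroup.closure (Set.range (Function.update g i x)) = ⊤

/-- `G` is a K-group: its subgroup lattice is complemented. -/
def IsKGroup (G : Type*) [Group G] : Prop :=
  ∀ H : Subgroup G, ∃ X : Subgroup G, H ⊔ X = ⊤ ∧ H ⊓ X = ⊥

/-- `μ` is the Möbius function of the subgroup lattice of `G`. -/
def IsMobius {G : Type*} [Group G] (μ : Subgroup G → ℤ) : Prop :=
  ∀ H : Subgroup G, ∑ᶠ K ∈ {K : Subgroup G | H ≤ K}, μ K = if H = ⊤ then 1 else 0

/-- `B/A` is a chief factor of `G`. -/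
def ChiefFactor {G : Type*} [Group G] (A B : Subgroup G) : Prop :=
  A.Normal ∧ B.Normal ∧ A < B ∧
    ∀ N : Subgroup G, N.Normal → A ≤ N → N ≤ B → N = A ∨ N = B

/-- The factor `B/A` is complemented in `G/A`: there is a subgroup `K ≥ A`
with `K ⊔ B = G` and `K ⊓ B = A`. -/
def ComplementedFactor {G : Type*} [Group G] (A B : Subgroup G) : Prop :=
  ∃ K : Subgroup G, A ≤ K ∧ K ⊔ B = ⊤ ∧ K ⊓ B = A

/-- `c` is a chief series of `G`. -/
def IsChiefSeries {G : Type*} [Group G] {n : ℕ} (c : Fin (n + 1) → Subgroup G) : Prop :=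
  c 0 = ⊥ ∧ c (Fin.last n) = ⊤ ∧ ∀ i : Fin n, ChiefFactor (c i.castSucc) (c i.succ)

/-- `N` is a minimal normal subgroup of `G`. -/
def IsMinimalNormal {G : Type*} [Group G] (N : Subgroup G) : Prop :=
  N.Normal ∧ N ≠ ⊥ ∧ ∀ K : Subgroup G, K.Normal → K ≤ N → K = ⊥ ∨ K = N

/-- `F` is the Fitting subgroup of `G`: the largest nilpotent normal subgroup. -/
def IsFitting {G : Type*} [Group G] (F : Subgroup G) : Prop :=
  F.Normal ∧ Group.IsNilpotent F ∧
    ∀ K : Subgroup G, K.Normal → Group.IsNilpotent K → K ≤ F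

/-! A nontrivial element `x` of the Frattini subgroup can never replace an entry `gᵢ` of an
irredundant generating sequence: the new sequence lies in `⟨x⟩ ⊔ ⟨gⱼ : j ≠ i⟩`, and since `x` is a
non-generator, the `gⱼ` with `j ≠ i` would already generate `G`. A finite group has irredundant
generating sequences of the maximal length `mIrr G`, so under the replacement property no such `x`
exists. -/

section Irredundant

variable {G : Type*} [Group G]

lemma exists_irredSet [Finite G] : ∃ s : Set G, IrredSet s := by
  obtain ⟨s, hs⟩ := exists_minimal_of_wellFoundedLT (fun s : Set G ↦ closure s = ⊤)
    ⟨Set.univ, closure_univ⟩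
  exact ⟨s, hs.prop, fun x hx ↦ hs.not_prop_of_lt (Set.sdiff_singleton_ssubset.mpr hx)⟩

lemma exists_irredSet_ncard_eq_mIrr [Finite G] :
    ∃ s : Set G, s.Finite ∧ s.ncard = mIrr G ∧ IrredSet s := by
  obtain ⟨s, hs⟩ := exists_irredSet (G := G)
  have hne : {n | ∃ s : Set G, s.Finite ∧ s.ncard = n ∧ IrredSet s}.Nonempty :=
    ⟨s.ncard, s, s.toFinite, rfl, hs⟩
  exact Nat.sSup_mem hne ⟨Nat.card G, fun _ ⟨s, _, hn, _⟩ ↦ hn ▸ Set.ncard_le_card s⟩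

lemma IrredSet.exists_irredSeq {s : Set G} (hs : IrredSet s) (hfin : s.Finite) :
    ∃ g : Fin s.ncard → G, IrredSeq g := by
  obtain ⟨n, g, hinj, rfl⟩ := hfin.fin_param
  rw [Set.ncard_range_of_injective hinj, Nat.card_eq_fintype_card, Fintype.card_fin]
  refine ⟨g, hs.1, fun i ↦ ?_⟩
  rw [Set.image_compl_eq_range_sdiff_image hinj, Set.image_singleton]
  exact hs.2 _ (Set.mem_range_self i)

lemma exists_irredSeq_mIrr [Finite G] : ∃ g : Fin (mIrr G) → G, IrredSeq g := by
  obtain ⟨s, hfin, hcard, hs⟩ := exists_irredSet_ncard_eq_mIrr (G := G)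
  exact hcard ▸ hs.exists_irredSeq hfin

end Irredundant

lemma Set.range_update_subset_insert_image_compl {ι α : Type*} [DecidableEq ι] (f : ι → α)
    (i : ι) (a : α) : Set.range (Function.update f i a) ⊆ insert a (f '' {i}ᶜ) := by
  rintro _ ⟨j, rfl⟩
  by_cases hj : j = i
  · simp [hj]
  · exact Or.inr ⟨j, hj, (Function.update_of_ne hj a f).symm⟩

lemma closure_eq_top_of_closure_insert_eq_top {G : Type*} [Group G] [IsCoatomic (Subgroup G)]
    {s : Set G} {x : G} (hx : x ∈ frattini G) (h : closure (insert x s) = ⊤) :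
    closure s = ⊤ := by
  refine frattini_nongenerating (top_le_iff.mp ?_)
  calc ⊤ = closure (insert x s) := h.symm
    _ = closure {x} ⊔ closure s := by rw [Set.insert_eq, Subgroup.closure_union]
    _ ≤ closure s ⊔ frattini G := by
      rw [sup_comm]
      exact sup_le_sup_left ((closure_le _).mpr (Set.singleton_subset_iff.mpr hx)) _

theorem replacementProperty_implies_frattini_eq_bot
    (G : Type*) [Group G] [Finite G] (h : ReplacementProperty G) :
    frattini G = ⊥ := by
  refine (eq_bot_iff_forall _).mpr fun x hx ↦ by_contra fun hx1 ↦ ?_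
  obtain ⟨g, hg⟩ := exists_irredSeq_mIrr (G := G)
  obtain ⟨i, htop⟩ := h g hg x hx1
  refine hg.2 i (closure_eq_top_of_closure_insert_eq_top hx (top_le_iff.mp ?_))
  exact htop ▸ closure_mono (Set.range_update_subset_insert_image_compl g i x)
end

section
/- Let G be a finite soluble group satisfying the replacement property, with trivial Frattini subgroup, and write the Fitting subgroup F = N_1 × ... × N_t as a direct product of minimal normal subgroups with complement H in G. Then H also satisfies the replacement property. -/
open Subgroup
open scoped Classical

/-!
Minimal normal subgroups of a soluble group are abelian, so `F = N₁ ⋯ N_t` is abelian and, for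
every `K` with `K F = G`, the subgroup `K ∩ F` is normal in `G`; moreover `G / F ≅ H`.

Appending nontrivial elements `nⱼ ∈ Nⱼ` to an irredundant generating sequence of `H` gives one
of `G`, so `m(G) ≥ m(H) + t`. Conversely, in an irredundant generating family of `G` take a
minimal subfamily generating `G` modulo `F`: it maps onto an irredundant generating family of
`H`, and adding the other members one at a time strictly enlarges the normal subgroup `K ∩ F`
generated so far, which happens at most `t` times. Hence `m(G) = m(H) + t`, the appended
sequence has maximal length, and the replacement property of `G` for it and `x ∈ H` cannot
replace an `nⱼ` (the `H`-entries already generate `x`), so it replaces an `H`-entry; reading the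
result modulo `F` is a replacement in `H`.
-/

open Function
open Set hiding centralizer
open scoped Pointwise

section IrredundantFamily

variable {G : Type*} [Group G]

/-- `IrredSeq` for families indexed by an arbitrary type. -/
def IsIrredundantFamily {ι : Type*} (f : ι → G) : Prop :=
  closure (range f) = ⊤ ∧ ∀ i, closure (f '' {i}ᶜ) ≠ ⊤

variable {ι κ : Type*} {f : ι → G}

theorem closure_image_compl_eq_top_of_mem (hf : closure (range f) = ⊤) {i : ι}
    (h : f i ∈ closure (f '' {i}ᶜ)) : closure (f '' {i}ᶜ) = ⊤ := by
  refine top_le_iff.mp (hf ▸ (closure_le _).mpr ?_)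
  rintro _ ⟨k, rfl⟩
  by_cases hk : k = i
  · exact hk ▸ h
  · exact subset_closure ⟨k, hk, rfl⟩

theorem IsIrredundantFamily.injective (hf : IsIrredundantFamily f) : Injective f := by
  intro k l hkl
  by_contra hne
  exact hf.2 k <|
    closure_image_compl_eq_top_of_mem hf.1 (hkl ▸ subset_closure ⟨l, Ne.symm hne, rfl⟩)

theorem IsIrredundantFamily.irredSet_range (hf : IsIrredundantFamily f) : IrredSet (range f) := by
  refine ⟨hf.1, ?_⟩
  rintro _ ⟨i, rfl⟩
  rw [← image_singleton, range_sdiff_image hf.injective]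
  exact hf.2 i

theorem IrredSet.isIrredundantFamily_val {s : Set G} (hs : IrredSet s) :
    IsIrredundantFamily (Subtype.val : s → G) := by
  refine ⟨by rw [Subtype.range_val]; exact hs.1, fun x ↦ ?_⟩
  rw [← range_sdiff_image Subtype.val_injective, image_singleton, Subtype.range_val]
  exact hs.2 x x.2

theorem IsIrredundantFamily.comp_equiv (hf : IsIrredundantFamily f) (e : κ ≃ ι) :
    IsIrredundantFamily (f ∘ e) := by
  refine ⟨by rw [e.surjective.range_comp]; exact hf.1, fun k ↦ ?_⟩
  rw [image_comp, e.image_compl, image_singleton]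
  exact hf.2 (e k)

theorem bddAbove_irredSet_ncard [Finite G] :
    BddAbove {n | ∃ s : Set G, s.Finite ∧ s.ncard = n ∧ IrredSet s} :=
  ⟨Nat.card G, by rintro _ ⟨s, -, rfl, -⟩; exact ncard_le_card s⟩

theorem IsIrredundantFamily.natCard_le_mIrr [Finite G] [Finite ι]
    (hf : IsIrredundantFamily f) : Nat.card ι ≤ mIrr G :=
  le_csSup bddAbove_irredSet_ncard
    ⟨range f, finite_range f, ncard_range_of_injective hf.injective, hf.irredSet_range⟩

theorem mIrr_le [Finite G] {b : ℕ}
    (h : ∀ s : Set G, IsIrredundantFamily (Subtype.val : s → G) → Nat.card s ≤ b) :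
    mIrr G ≤ b :=
  csSup_le' fun _ ⟨s, _, hs, hirr⟩ ↦ hs ▸ h s hirr.isIrredundantFamily_val

theorem ReplacementProperty.exists_closure_range_update_eq_top (hrep : ReplacementProperty G)
    [Finite ι] [DecidableEq ι] (hcard : Nat.card ι = mIrr G) (hf : IsIrredundantFamily f)
    {x : G} (hx : x ≠ 1) :
    ∃ i, closure (range (update f i x)) = ⊤ := by
  let e := Finite.equivFinOfCardEq hcard
  obtain ⟨i, hi⟩ := hrep (f ∘ e.symm) (hf.comp_equiv e.symm) x hx
  refine ⟨e.symm i, ?_⟩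
  rwa [← e.symm.surjective.range_comp, update_comp_equiv, Equiv.symm_symm, e.apply_symm_apply]

theorem closure_range_update_le [DecidableEq ι] {i : ι} {x : G}
    (hx : x ∈ closure (f '' {i}ᶜ)) :
    closure (range (update f i x)) ≤ closure (f '' {i}ᶜ) := by
  refine (closure_le _).mpr ?_
  rintro _ ⟨k, rfl⟩
  by_cases hk : k = i
  · subst hk; simpa using hx
  · rw [update_of_ne hk]; exact subset_closure ⟨k, hk, rfl⟩

end IrredundantFamily

section NormalSubgroups

variable {G : Type*} [Group G]

theorem eq_of_le_of_inf_le_of_sup_le_of_normal {x y z : Subgroup G} [z.Normal] (hxy : x ≤ y)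
    (hinf : y ⊓ z ≤ x ⊓ z) (hsup : y ⊔ z ≤ x ⊔ z) : x = y := by
  refine le_antisymm hxy fun b hb ↦ ?_
  have hb' : b ∈ (↑(x ⊔ z) : Set G) := hsup (mem_sup_left hb)
  rw [mul_normal] at hb'
  obtain ⟨a, ha, c, hc, rfl⟩ := hb'
  have hcy : c ∈ y := by simpa using mul_mem (inv_mem (hxy ha)) hb
  exact mul_mem ha (hinf ⟨hcy, hc⟩).1

theorem IsMinimalNormal.le_of_mem {N K : Subgroup G} (hN : IsMinimalNormal N) [K.Normal]
    {x : G} (hxN : x ∈ N) (hxK : x ∈ K) (hx : x ≠ 1) : N ≤ K := by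
  have := hN.1
  rcases hN.2.2 (K ⊓ N) inferInstance inf_le_right with h | h
  · exact absurd (mem_bot.mp (h ▸ mem_inf.mpr ⟨hxK, hxN⟩)) hx
  · exact h ▸ inf_le_left

theorem IsMinimalNormal.le_centralizer [Group.IsSolvable G] {N : Subgroup G}
    (hN : IsMinimalNormal N) : N ≤ centralizer N := by
  have := hN.1
  rw [← commutator_eq_bot_iff_le_centralizer]
  refine (hN.2.2 _ inferInstance (commutator_le_left N N)).resolve_right fun hperfect ↦ ?_
  refine hN.2.1 (le_bot_iff.mp ?_)
  have hder : ∀ k, N ≤ derivedSeries G k := by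
    intro k
    induction k with
    | zero => exact le_top
    | succ k ih => rw [derivedSeries_succ, ← hperfect]; exact commutator_mono ih ih
  obtain ⟨n, hn⟩ := Group.IsSolvable.solvable (G := G)
  exact hn ▸ hder n

theorem IsMinimalNormal.le_centralizer_of_isMinimalNormal [Group.IsSolvable G]
    {N M : Subgroup G} (hN : IsMinimalNormal N) (hM : IsMinimalNormal M) : N ≤ centralizer M := by
  have := hN.1
  have := hM.1
  rcases hN.2.2 (N ⊓ M) inferInstance inf_le_left with h | h
  · exact fun x hx y hy ↦ (commute_of_normal_of_disjoint N M hN.1 hM.1 (disjoint_iff.mpr h)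
      x y hx hy).symm.eq
  · exact (h ▸ inf_le_right : N ≤ M).trans hM.le_centralizer

theorem iSup_le_centralizer_iSup [Group.IsSolvable G] {ι : Type*} {N : ι → Subgroup G}
    (hmin : ∀ i, IsMinimalNormal (N i)) : ⨆ i, N i ≤ centralizer (⨆ i, N i : Subgroup G) :=
  iSup_le fun i ↦ le_centralizer_iff.mpr <| iSup_le fun j ↦
    (hmin j).le_centralizer_of_isMinimalNormal (hmin i)

theorem inf_normal_of_sup_eq_top {K F : Subgroup G} [hFn : F.Normal] (hF : F ≤ centralizer F)
    (h : K ⊔ F = ⊤) : (K ⊓ F).Normal := by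
  refine ⟨fun y hy g ↦ ?_⟩
  obtain ⟨hyK, hyF⟩ := mem_inf.mp hy
  have hg : g ∈ (↑(K ⊔ F) : Set G) := h ▸ Subgroup.mem_top g
  rw [mul_normal] at hg
  obtain ⟨k, hk, f, hf, rfl⟩ := hg
  have hfy : f * y * f⁻¹ = y := by rw [(hF hf y hyF).symm, mul_inv_cancel_right]
  have hconj : k * f * y * (k * f)⁻¹ = k * (f * y * f⁻¹) * k⁻¹ := by group
  rw [hconj, hfy]
  exact mem_inf.mpr ⟨mul_mem (mul_mem hk hyK) (inv_mem hk), hFn.conj_mem y hyF k⟩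

end NormalSubgroups

section FlagRank

variable {G : Type*} [Group G] {t : ℕ}

def prefixSup (N : Fin t → Subgroup G) (k : ℕ) : Subgroup G :=
  ⨆ (j : Fin t) (_ : (j : ℕ) < k), N j

/-- The number of factors `prefixSup N (i + 1) / prefixSup N i` that `X` covers. For normal
subgroups of `⨆ i, N i` it is strictly monotone, so it bounds the length of their chains. -/
noncomputable def flagRank (N : Fin t → Subgroup G) (X : Subgroup G) : ℕ :=
  (Finset.univ.filter fun i : Fin t ↦ N i ≤ X ⊔ prefixSup N i).card

variable {N : Fin t → Subgroup G}

theorem prefixSup_zero : prefixSup N 0 = ⊥ := by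
  simp [prefixSup]

theorem prefixSup_self : prefixSup N t = ⨆ i, N i := by
  simp [prefixSup]

theorem prefixSup_succ {k : ℕ} (hk : k < t) :
    prefixSup N (k + 1) = prefixSup N k ⊔ N ⟨k, hk⟩ := by
  refine le_antisymm (iSup₂_le fun j hj ↦ ?_) (sup_le (iSup₂_le fun j hj ↦ ?_) ?_)
  · rcases Nat.lt_succ_iff_lt_or_eq.mp hj with hj | hj
    · exact le_sup_of_le_left (le_iSup₂_of_le j hj le_rfl)
    · exact le_sup_of_le_right (le_of_eq (congrArg N (Fin.ext hj)))
  · exact le_iSup₂_of_le j (hj.trans k.lt_succ_self) le_rfl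
  · exact le_iSup₂_of_le (f := fun (j : Fin t) (_ : (j : ℕ) < k + 1) ↦ N j) ⟨k, hk⟩
      k.lt_succ_self le_rfl

theorem prefixSup_normal (hN : ∀ i, (N i).Normal) (k : ℕ) : (prefixSup N k).Normal := by
  have := hN
  unfold prefixSup
  infer_instance

theorem le_sup_of_le_sup_sup {X Y M L : Subgroup G} (hL : IsMinimalNormal L) [Y.Normal]
    [M.Normal] (hXY : X ≤ Y) (hY : Y ≤ X ⊔ M ⊔ L) (h : L ≤ Y ⊔ M → L ≤ X ⊔ M) :
    Y ≤ X ⊔ M := by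
  have := hL.1
  rcases hL.2.2 ((Y ⊔ M) ⊓ L) inferInstance inf_le_right with hbot | hL'
  · have : X ⊔ M = Y ⊔ M := eq_of_le_of_inf_le_of_sup_le_of_normal (sup_le_sup_right hXY M)
      (by rw [hbot]; exact bot_le)
      (sup_le (sup_le hY (le_sup_of_le_left le_sup_right)) le_sup_right)
    exact this ▸ le_sup_left
  · exact hY.trans (sup_le le_rfl (h (hL' ▸ inf_le_left)))

theorem flagRank_le (X : Subgroup G) : flagRank N X ≤ t :=
  (Finset.card_filter_le _ _).trans (by simp)

theorem flagRank_lt_flagRank (hmin : ∀ i, IsMinimalNormal (N i)) {X Y : Subgroup G} [Y.Normal]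
    (hXY : X < Y) (hY : Y ≤ ⨆ i, N i) : flagRank N X < flagRank N Y := by
  have hsub : (Finset.univ.filter fun i : Fin t ↦ N i ≤ X ⊔ prefixSup N i) ⊆
      Finset.univ.filter fun i : Fin t ↦ N i ≤ Y ⊔ prefixSup N i :=
    fun i ↦ by
      simp only [Finset.mem_filter, Finset.mem_univ, true_and]
      exact fun h ↦ h.trans (sup_le_sup_right hXY.le _)
  refine Finset.card_lt_card ((Finset.ssubset_iff_of_subset hsub).mpr ?_)
  by_contra! hall
  simp only [Finset.mem_filter, Finset.mem_univ, true_and] at hall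
  have key : ∀ k ≤ t, Y ≤ X ⊔ prefixSup N k := by
    intro k hk
    refine Nat.decreasingInduction (motive := fun k _ ↦ Y ≤ X ⊔ prefixSup N k) ?_ ?_ hk
    · intro k hk ih
      have := prefixSup_normal (fun i ↦ (hmin i).1) k
      rw [prefixSup_succ hk, ← sup_assoc] at ih
      exact le_sup_of_le_sup_sup (hmin ⟨k, hk⟩) hXY.le ih (hall ⟨k, hk⟩)
    · rw [prefixSup_self]; exact hY.trans le_sup_right
  exact hXY.not_ge (by simpa [prefixSup_zero] using key 0 t.zero_le)

end FlagRank

section UpperBound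

variable {G K : Type*} [Group G] [Group K] {ρ : G →* K} {ι : Type*} {f : ι → G}

theorem map_eq_top_iff_sup_ker_eq_top (hρ : Surjective ρ) (X : Subgroup G) :
    X.map ρ = ⊤ ↔ X ⊔ ρ.ker = ⊤ := by
  rw [← (comap_injective hρ).eq_iff, comap_map_eq, comap_top]

theorem ncard_le_mIrr_of_minimal [Finite K] [Finite ι] (hρ : Surjective ρ) {S : Set ι}
    (hS : Minimal (fun S ↦ closure (f '' S) ⊔ ρ.ker = ⊤) S) : S.ncard ≤ mIrr K := by
  refine IsIrredundantFamily.natCard_le_mIrr (f := ρ ∘ f ∘ (Subtype.val : S → ι))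
    ⟨?_, fun k ↦ ?_⟩
  · rw [range_comp, range_comp, Subtype.range_val, ← MonoidHom.map_closure,
      map_eq_top_iff_sup_ker_eq_top hρ]
    exact hS.prop
  · rw [image_comp, image_comp, ← range_sdiff_image Subtype.val_injective, Subtype.range_val,
      image_singleton, ← MonoidHom.map_closure, Ne, map_eq_top_iff_sup_ker_eq_top hρ]
    exact hS.not_prop_of_lt (sdiff_singleton_ssubset.mpr k.2)

theorem ncard_compl_le_of_minimal [Finite ι] [Group.IsSolvable G] {t : ℕ}
    {N : Fin t → Subgroup G} (hmin : ∀ i, IsMinimalNormal (N i)) (hker : ρ.ker = ⨆ i, N i)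
    (hf : IsIrredundantFamily f) {S : Set ι}
    (hS : Minimal (fun S ↦ closure (f '' S) ⊔ ρ.ker = ⊤) S) : Sᶜ.ncard ≤ t := by
  set F := ρ.ker
  have hFab : F ≤ centralizer F := hker ▸ iSup_le_centralizer_iSup hmin
  let X : Set ι → Subgroup G := fun U ↦ closure (f '' (S ∪ U))
  have hX_mono : Monotone X := fun _ _ hUV ↦
    closure_mono (image_mono (union_subset_union_right S hUV))
  have hX_sup : ∀ U, X U ⊔ F = ⊤ := fun U ↦ top_le_iff.mp <|
    hS.prop ▸ sup_le_sup_right (Subgroup.closure_mono (image_mono subset_union_left)) F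
  have hX_lt : ∀ U a, a ∉ S → a ∉ U → X U ⊓ F < X (insert a U) ⊓ F := by
    intro U a haS haU
    refine lt_of_le_of_ne (inf_le_inf_right F (hX_mono (subset_insert a U))) fun heq ↦ ?_
    have hXeq : X U = X (insert a U) := eq_of_le_of_inf_le_of_sup_le_of_normal
      (hX_mono (subset_insert a U)) heq.ge (by rw [hX_sup, hX_sup])
    have hXa : X U ≤ closure (f '' {a}ᶜ) :=
      closure_mono (image_mono (subset_compl_singleton_iff.mpr (not_or.mpr ⟨haS, haU⟩)))
    refine hf.2 a (closure_image_compl_eq_top_of_mem hf.1 (hXa ?_))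
    exact hXeq ▸ subset_closure ⟨a, Or.inr (mem_insert a U), rfl⟩
  have hrank : Sᶜ.ncard ≤ flagRank N (X Sᶜ ⊓ F) := by
    refine Finite.induction_on_subset (motive := fun U _ ↦ U.ncard ≤ flagRank N (X U ⊓ F))
      Sᶜ (toFinite _) (by simp) fun {a U} haS _ haU ih ↦ ?_
    have := inf_normal_of_sup_eq_top hFab (hX_sup (insert a U))
    rw [ncard_insert_of_notMem haU (toFinite U)]
    exact ih.trans_lt <|
      flagRank_lt_flagRank hmin (hX_lt U a haS haU) (inf_le_right.trans hker.le)
  exact hrank.trans (flagRank_le _)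

theorem IsIrredundantFamily.natCard_le_mIrr_add [Finite K] [Finite ι] [Group.IsSolvable G]
    {t : ℕ} {N : Fin t → Subgroup G} (hmin : ∀ i, IsMinimalNormal (N i)) (hρ : Surjective ρ)
    (hker : ρ.ker = ⨆ i, N i) (hf : IsIrredundantFamily f) : Nat.card ι ≤ mIrr K + t := by
  obtain ⟨S, -, hS⟩ := exists_minimal_le_of_wellFoundedLT
    (fun S : Set ι ↦ closure (f '' S) ⊔ ρ.ker = ⊤) univ
    (by rw [image_univ, hf.1, top_sup_eq])
  rw [← ncard_add_ncard_compl S]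
  exact add_le_add (ncard_le_mIrr_of_minimal hρ hS) (ncard_compl_le_of_minimal hmin hker hf hS)

end UpperBound

section Complement

variable {G : Type*} [Group G] {H F : Subgroup G}

theorem exists_surjective_ker_eq_of_complement [F.Normal] (hsup : H ⊔ F = ⊤)
    (hinf : H ⊓ F = ⊥) : ∃ ρ : G →* H, Surjective ρ ∧ ρ.ker = F := by
  have hc : H.IsComplement' F := isComplement'_of_disjoint_and_mul_eq_univ
    (disjoint_iff.mpr hinf) (by rw [← mul_normal, hsup, coe_top])
  refine ⟨(hc.QuotientMulEquiv : G ⧸ F →* H).comp (QuotientGroup.mk' F),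
    hc.QuotientMulEquiv.surjective.comp (QuotientGroup.mk'_surjective F), ?_⟩
  rw [MonoidHom.ker_mulEquiv_comp, QuotientGroup.ker_mk']

theorem le_of_sup_eq_top_of_inf_eq_bot {R : Subgroup G} [R.Normal] (hRF : R ≤ F)
    (hHR : H ⊔ R = ⊤) (hHF : H ⊓ F = ⊥) : F ≤ R := by
  have : (F : Set G) = R := calc
    (F : Set G) = (F : Set G) ∩ ((H : Set G) * R) := by
      rw [← mul_normal, hHR, coe_top, inter_univ]
    _ = ↑(F ⊓ H) * R := (inf_mul_assoc F H R hRF).symm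
    _ = R := by rw [inf_comm, hHF, coe_bot, singleton_one, one_mul]
  exact (SetLike.coe_set_eq.mp this).le

theorem le_closure_image_val {s : Set H} (hs : closure s = ⊤) :
    H ≤ closure (((↑) : H → G) '' s) := by
  rw [← H.coe_subtype, ← MonoidHom.map_closure, hs, ← MonoidHom.range_eq_map,
    range_subtype]

theorem closure_eq_top_of_subset_image_union [F.Normal] (hsup : H ⊔ F = ⊤)
    (hinf : H ⊓ F = ⊥) {s : Set H} {u : Set G} (hu : u ⊆ (↑) '' s ∪ F) (h : closure u = ⊤) :
    closure s = ⊤ := by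
  have hmap : (closure s).map H.subtype ⊔ F = ⊤ := by
    rw [MonoidHom.map_closure, ← closure_eq F, ← Subgroup.closure_union, eq_top_iff, ← h]
    exact closure_mono hu
  have hH : (closure s).map H.subtype = H := eq_of_le_of_inf_le_of_sup_le_of_normal
    (map_subtype_le _) (by rw [hinf]; exact bot_le) (by rw [hsup, hmap])
  refine map_injective H.subtype_injective (hH.trans ?_)
  rw [← MonoidHom.range_eq_map, range_subtype]

theorem isIrredundantFamily_sumElim [Group.IsSolvable G] {t : ℕ} {N : Fin t → Subgroup G}
    (hmin : ∀ i, IsMinimalNormal (N i)) (hind : iSupIndep N)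
    (hsup : H ⊔ ⨆ i, N i = ⊤) (hinf : H ⊓ ⨆ i, N i = ⊥) {κ : Type*} {h : κ → H}
    (hh : IsIrredundantFamily h) {n : Fin t → G} (hnN : ∀ j, n j ∈ N j)
    (hn1 : ∀ j, n j ≠ 1) :
    IsIrredundantFamily (Sum.elim (fun k ↦ (h k : G)) n) := by
  have := fun i ↦ (hmin i).1
  have hnF : ∀ j, n j ∈ ⨆ i, N i := fun j ↦ le_iSup N j (hnN j)
  refine ⟨?_, ?_⟩
  · set L := closure (range (Sum.elim (fun k ↦ (h k : G)) n))
    have hHL : H ≤ L := by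
      refine (le_closure_image_val hh.1).trans (Subgroup.closure_mono ?_)
      rintro _ ⟨_, ⟨k, rfl⟩, rfl⟩
      exact ⟨Sum.inl k, rfl⟩
    have := inf_normal_of_sup_eq_top (iSup_le_centralizer_iSup hmin)
      (top_le_iff.mp (hsup ▸ sup_le_sup_right hHL _))
    have hFL : ⨆ i, N i ≤ L := iSup_le fun j ↦
      ((hmin j).le_of_mem (K := L ⊓ ⨆ i, N i) (hnN j)
        (mem_inf.mpr ⟨subset_closure ⟨Sum.inr j, rfl⟩, hnF j⟩) (hn1 j)).trans inf_le_left
    exact top_le_iff.mp (hsup ▸ sup_le hHL hFL)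
  · rintro (i | j) htop
    · refine hh.2 i (closure_eq_top_of_subset_image_union hsup hinf ?_ htop)
      rintro _ ⟨k | k, hk, rfl⟩
      · exact Or.inl ⟨h k, ⟨k, fun hki ↦ hk (hki ▸ rfl), rfl⟩, rfl⟩
      · exact Or.inr (hnF k)
    · have hHR : H ⊔ ⨆ (k) (_ : k ≠ j), N k = ⊤ := by
        refine top_le_iff.mp (htop ▸ (closure_le _).mpr ?_)
        rintro _ ⟨k | k, hk, rfl⟩
        · exact mem_sup_left (h k).2
        · exact mem_sup_right (le_iSup₂ (f := fun k (_ : k ≠ j) ↦ N k) k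
            (fun hkj ↦ hk (hkj ▸ rfl)) (hnN k))
      have hFR := le_of_sup_eq_top_of_inf_eq_bot (iSup₂_le fun k _ ↦ le_iSup N k) hHR hinf
      exact (hmin j).2.1 ((hind j).eq_bot_of_le ((le_iSup N j).trans hFR))

theorem exists_closure_range_update_eq_top_of_sumElim [F.Normal] (hsup : H ⊔ F = ⊤)
    (hinf : H ⊓ F = ⊥) {κ ν : Type*} [DecidableEq κ] [DecidableEq ν] {h : κ → H} {n : ν → G}
    (hh : closure (range h) = ⊤) (hf : IsIrredundantFamily (Sum.elim (fun k ↦ (h k : G)) n))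
    (hnF : ∀ j, n j ∈ F) {x : H}
    (hx : ∃ i, closure (range (update (Sum.elim (fun k ↦ (h k : G)) n) i x)) = ⊤) :
    ∃ i, closure (range (update h i x)) = ⊤ := by
  obtain ⟨i | j, hi⟩ := hx
  · refine ⟨i, closure_eq_top_of_subset_image_union hsup hinf ?_ hi⟩
    rintro _ ⟨k | k, rfl⟩
    · by_cases hk : k = i
      · subst hk
        exact Or.inl ⟨x, ⟨k, update_self k x h⟩, by simp⟩
      · rw [update_of_ne (Sum.inl_injective.ne hk)]
        exact Or.inl ⟨h k, ⟨k, update_of_ne hk x h⟩, rfl⟩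
    · rw [update_of_ne Sum.inr_ne_inl]
      exact Or.inr (hnF k)
  · have hx' : (x : G) ∈ closure (Sum.elim (fun k ↦ (h k : G)) n '' {Sum.inr j}ᶜ) := by
      refine (le_closure_image_val hh).trans (Subgroup.closure_mono ?_) x.2
      rintro _ ⟨_, ⟨k, rfl⟩, rfl⟩
      exact ⟨Sum.inl k, Sum.inl_ne_inr, rfl⟩
    exact absurd (top_le_iff.mp (hi ▸ closure_range_update_le hx')) (hf.2 (Sum.inr j))

end Complement

theorem replacementProperty_of_complement_of_fitting_general
    (G : Type*) [Group G] [Finite G] [Group.IsSolvable G]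
    (hrep : ReplacementProperty G)
    (F : Subgroup G) {t : ℕ} (N : Fin t → Subgroup G)
    (hmin : ∀ i, IsMinimalNormal (N i)) (hind : iSupIndep N) (hsup : ⨆ i, N i = F)
    (H : Subgroup G) (hcompl : H ⊔ F = ⊤ ∧ H ⊓ F = ⊥) :
    ReplacementProperty ↥H := by
  subst hsup
  have := fun i ↦ (hmin i).1
  obtain ⟨ρ, hρ, hker⟩ := exists_surjective_ker_eq_of_complement hcompl.1 hcompl.2
  choose n hnN hn1 using fun j ↦ (bot_or_exists_ne_one (N j)).resolve_left (hmin j).2.1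
  intro h hh x hx
  have hf := isIrredundantFamily_sumElim hmin hind hcompl.1 hcompl.2 hh hnN hn1
  have hcard : Nat.card (Fin (mIrr H) ⊕ Fin t) = mIrr G := by
    refine le_antisymm hf.natCard_le_mIrr (mIrr_le fun s hs ↦ ?_)
    simpa using hs.natCard_le_mIrr_add hmin hρ hker
  exact exists_closure_range_update_eq_top_of_sumElim hcompl.1 hcompl.2 hh.1 hf
    (fun j ↦ le_iSup N j (hnN j)) (hrep.exists_closure_range_update_eq_top hcard hf (by simpa))

theorem replacementProperty_of_complement_of_fitting
    (G : Type*) [Group G] [Finite G] [Group.IsSolvable G]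
    (hrep : ReplacementProperty G) (hfr : frattini G = ⊥)
    (F : Subgroup G) (hF : IsFitting F) {t : ℕ} (N : Fin t → Subgroup G)
    (hmin : ∀ i, IsMinimalNormal (N i)) (hind : iSupIndep N) (hsup : ⨆ i, N i = F)
    (H : Subgroup G) (hcompl : H ⊔ F = ⊤ ∧ H ⊓ F = ⊥) :
    ReplacementProperty ↥H :=
  replacementProperty_of_complement_of_fitting_general G hrep F N hmin hind hsup H hcompl
end
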